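/- Trace-norm contractivity of quantum channels: let K₁, …, K_I be m×n complex matrices with Σ_{i=1}^{I} K_iᴴ K_i = 1ₙ, and define Φ(X) := Σ_{i=1}^{I} K_i X K_iᴴ for n×n complex matrices X. Then for every Hermitian n×n complex matrix X, ‖Φ(X)‖₁ ≤ ‖X‖₁. -/

import Mathlib

/-!
For Hermitian `Y`, `‖Y‖₁ = Tr |Y|` is the maximum of `Re Tr (C Y)` over `-1 ≤ C ≤ 1`: the bound
follows from `Y = Y⁺ - Y⁻` and `|Y| = Y⁺ + Y⁻`, and it is attained at the sign `C = sgn Y`.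
Taking `S = sgn Φ(X)`, we get `‖Φ(X)‖₁ = Re Tr (S Φ(X)) = Re Tr (Φ†(S) X)` for the dual map
`Φ†(S) = ∑ᵢ Kᵢᴴ S Kᵢ`, which is positive and unital, so `-1 ≤ Φ†(S) ≤ 1` and the bound gives
`‖Φ(X)‖₁ ≤ ‖X‖₁`.
-/

open scoped ComplexOrder Matrix

/-- The trace norm `‖M‖₁ = Tr[√(Mᴴ M)]` of a square complex matrix
(the sum of its singular values). -/
noncomputable def traceNorm {ι : Type*} [Fintype ι] [DecidableEq ι] (M : Matrix ι ι ℂ) : ℝ :=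
  (((Matrix.posSemidef_conjTranspose_mul_self M).1.eigenvectorUnitary : Matrix ι ι ℂ) *
    Matrix.diagonal (((↑) : ℝ → ℂ) ∘ (√·) ∘ (Matrix.posSemidef_conjTranspose_mul_self M).1.eigenvalues) *
    (star (Matrix.posSemidef_conjTranspose_mul_self M).1.eigenvectorUnitary : Matrix ι ι ℂ)).trace.re

open Matrix
open scoped MatrixOrder

section TraceNorm

variable {ι : Type*} [Fintype ι] [DecidableEq ι]

theorem traceNorm_eq_re_trace_abs (M : Matrix ι ι ℂ) : traceNorm M = (CFC.abs M).trace.re := by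
  have hM := posSemidef_conjTranspose_mul_self M
  rw [CFC.abs, star_eq_conjTranspose, CFC.sqrt_eq_real_sqrt _ hM.nonneg, cfcₙ_eq_cfc,
    hM.1.cfc_eq]
  -- `traceNorm M` is by definition the trace of `hM.1.cfc (√·)`
  rfl

theorem Matrix.trace_mul_nonneg {𝕜 : Type*} [RCLike 𝕜] {A B : Matrix ι ι 𝕜} (hA : 0 ≤ A)
    (hB : 0 ≤ B) : 0 ≤ (A * B).trace := by
  obtain ⟨R, rfl⟩ := CStarAlgebra.nonneg_iff_eq_star_mul_self.mp hB
  rw [← Matrix.mul_assoc, trace_mul_cycle]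
  exact (star_right_conjugate_nonneg hA R).posSemidef.trace_nonneg

theorem Matrix.re_trace_mul_sub_le {𝕜 : Type*} [RCLike 𝕜] {C P N : Matrix ι ι 𝕜}
    (hC : C ∈ Set.Icc (-1) 1) (hP : 0 ≤ P) (hN : 0 ≤ N) :
    RCLike.re (C * (P - N)).trace ≤ RCLike.re (P + N).trace := by
  have hP' := (RCLike.nonneg_iff.mp (trace_mul_nonneg (sub_nonneg.mpr hC.2) hP)).1
  have hN' := (RCLike.nonneg_iff.mp (trace_mul_nonneg (neg_le_iff_add_nonneg'.mp hC.1) hN)).1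
  simp only [sub_mul, add_mul, one_mul, Matrix.mul_sub, trace_sub, trace_add, map_sub,
    map_add] at hP' hN' ⊢
  linarith

theorem re_trace_mul_le_traceNorm {C Y : Matrix ι ι ℂ} (hY : Y.IsHermitian)
    (hC : C ∈ Set.Icc (-1) 1) : (C * Y).trace.re ≤ traceNorm Y := by
  rw [traceNorm_eq_re_trace_abs, ← CFC.posPart_add_negPart Y hY.isSelfAdjoint]
  conv_lhs => rw [← CFC.posPart_sub_negPart Y hY.isSelfAdjoint]
  exact re_trace_mul_sub_le hC (CFC.posPart_nonneg Y) (CFC.negPart_nonneg Y)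

theorem exists_re_trace_mul_eq_traceNorm {Y : Matrix ι ι ℂ} (hY : Y.IsHermitian) :
    ∃ S ∈ Set.Icc (-1) 1, (S * Y).trace.re = traceNorm Y := by
  let sign : ℝ → ℝ := fun x ↦ if 0 ≤ x then 1 else -1
  have hsign : ContinuousOn sign (spectrum ℝ Y) := Y.finite_real_spectrum.continuousOn sign
  have hsign_mul : cfc sign Y * Y = CFC.abs Y := by
    rw [CFC.abs_eq_cfc_norm Y hY.isSelfAdjoint]
    conv_lhs => enter [2]; rw [← cfc_id' ℝ Y hY.isSelfAdjoint]
    rw [← cfc_mul sign _ Y]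
    refine cfc_congr fun x _ ↦ ?_
    by_cases hx : 0 ≤ x <;> simp [sign, hx, abs_of_nonneg, abs_of_neg, not_le.mp]
  refine ⟨cfc sign Y, ⟨?_, cfc_le_one sign Y fun x _ ↦ ?_⟩, ?_⟩
  · rw [neg_le, ← cfc_neg sign Y]
    exact cfc_le_one _ Y fun x _ ↦ by by_cases hx : 0 ≤ x <;> simp [sign, hx]
  · by_cases hx : 0 ≤ x <;> simp [sign, hx]
  · rw [hsign_mul, traceNorm_eq_re_trace_abs]

end TraceNorm

section Kraus

variable {m n κ : Type*} [Fintype m] [Fintype n] [Fintype κ]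

theorem Matrix.trace_mul_sum_mul_mul {R : Type*} [CommSemiring R] (S : Matrix m m R)
    (K : κ → Matrix m n R) (L : κ → Matrix n m R) (X : Matrix n n R) :
    (S * ∑ i, K i * X * L i).trace = ((∑ i, L i * S * K i) * X).trace := by
  simp only [Finset.mul_sum, Finset.sum_mul, trace_sum]
  refine Finset.sum_congr rfl fun i _ ↦ ?_
  rw [← Matrix.mul_assoc, ← Matrix.mul_assoc, trace_mul_cycle]
  simp only [Matrix.mul_assoc]

theorem Matrix.sum_conjTranspose_mul_mul_le {𝕜 : Type*} [RCLike 𝕜] (K : κ → Matrix m n 𝕜)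
    {A B : Matrix m m 𝕜} (hAB : A ≤ B) : ∑ i, (K i)ᴴ * A * K i ≤ ∑ i, (K i)ᴴ * B * K i := by
  rw [le_iff, ← Finset.sum_sub_distrib]
  refine posSemidef_sum _ fun i _ ↦ ?_
  rw [← Matrix.sub_mul, ← Matrix.mul_sub]
  exact (le_iff.mp hAB).conjTranspose_mul_mul_same (K i)

theorem Matrix.sum_conjTranspose_mul_mul_mem_Icc {𝕜 : Type*} [RCLike 𝕜] [DecidableEq m]
    [DecidableEq n] {K : κ → Matrix m n 𝕜} (hK : ∑ i, (K i)ᴴ * K i = 1) {S : Matrix m m 𝕜}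
    (hS : S ∈ Set.Icc (-1) 1) : ∑ i, (K i)ᴴ * S * K i ∈ Set.Icc (-1) 1 := by
  have h₁ := sum_conjTranspose_mul_mul_le K hS.1
  have h₂ := sum_conjTranspose_mul_mul_le K hS.2
  simp only [Matrix.mul_neg, Matrix.neg_mul, Matrix.mul_one, Finset.sum_neg_distrib, hK] at h₁ h₂
  exact ⟨h₁, h₂⟩

end Kraus

/-- **Trace-norm contractivity of quantum channels**: if `K₁, …, K_I` are `m × n` complex
matrices with `∑ᵢ Kᵢᴴ Kᵢ = 1ₙ`, then for the channel `Φ(X) = ∑ᵢ Kᵢ X Kᵢᴴ` and every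
Hermitian `n × n` matrix `X` we have `‖Φ(X)‖₁ ≤ ‖X‖₁`. -/
theorem traceNorm_channel_le {m n I : ℕ} (K : Fin I → Matrix (Fin m) (Fin n) ℂ)
    (hK : ∑ i, (K i)ᴴ * K i = 1)
    (X : Matrix (Fin n) (Fin n) ℂ) (hX : X.IsHermitian) :
    traceNorm (∑ i, K i * X * (K i)ᴴ) ≤ traceNorm X := by
  have hΦX : (∑ i, K i * X * (K i)ᴴ).IsHermitian :=
    isSelfAdjoint_sum _ fun i _ ↦ isHermitian_mul_mul_conjTranspose (K i) hX
  obtain ⟨S, hS, hSΦX⟩ := exists_re_trace_mul_eq_traceNorm hΦX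
  rw [← hSΦX, trace_mul_sum_mul_mul]
  exact re_trace_mul_le_traceNorm hX (sum_conjTranspose_mul_mul_mem_Icc hK hS)
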